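/- Let C ⊆ F_2^n be a linear code, f = (2^n/|C|)·1_C, and 0 ≤ ε ≤ 1/2 with p = (1-2ε)². Then E(T_ε f)² = E_{S ∼ p} 2^{|S| - r_C(S)}, where S ∼ p is a random subset of [n] with each element included independently with probability p, and r_C(S) is the rank of the columns of a generating matrix of C indexed by S. -/

import Mathlib

open Finset

/-- Rank of the column submatrix of `G` indexed by `T`. -/
noncomputable def colRank {n k : ℕ} (G : Fin k → Fin n → ZMod 2) (T : Finset (Fin n)) : ℕ :=
  Module.finrank (ZMod 2)
    (Submodule.span (ZMod 2) ((fun j => fun i => G i j) '' (T : Set (Fin n))))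

open Classical in
/-- The scaled indicator function `f = (2^n/|C|)·1_C`. -/
noncomputable def codeFn (n : ℕ) (C : Submodule (ZMod 2) (Fin n → ZMod 2))
    (x : Fin n → ZMod 2) : ℝ :=
  if x ∈ C then (2 : ℝ) ^ n / (Nat.card C) else 0

/-- Noise operator on the cube `(ZMod 2)^n`. -/
noncomputable def noiseOpZ (n : ℕ) (ε : ℝ) (f : (Fin n → ZMod 2) → ℝ)
    (x : Fin n → ZMod 2) : ℝ :=
  ∑ y : Fin n → ZMod 2, ε ^ hammingDist x y * (1 - ε) ^ (n - hammingDist x y) * f y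

/-! Since the noise kernel factors over coordinates, squaring the noise operator gives the noise
operator with parameter `2ε(1-ε) = (1-p)/2`, so `𝔼 (T_ε f)²` becomes a sum of that kernel over
pairs of codewords; by translation invariance this is `|C|` times the weight enumerator of `C` at
`(1-p)/2`. The MacWilliams identity turns it into `∑_{v ∈ C⊥} p^|v|` (the Parseval form, as the
Fourier transform of `f` is `1_{C⊥}`). Finally `p^|v| = ∑_{S ⊇ supp v} p^|S| (1-p)^(n-|S|)`, and
the dual codewords supported in `S` form the kernel of the column submatrix `G_S`, which has
dimension `|S| - r_C(S)`. -/

open Matrix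

theorem prod_ite_eq_eq_pow_hammingDist {ι β R : Type*} [Fintype ι] [DecidableEq β]
    [CommMonoid R] (x y : ι → β) (a b : R) :
    ∏ i, (if x i = y i then a else b) =
      b ^ hammingDist x y * a ^ (Fintype.card ι - hammingDist x y) := by
  classical
  have hcard : #{i | x i = y i} = Fintype.card ι - hammingDist x y := by
    rw [← card_univ, ← card_filter_add_card_filter_not (s := univ) (fun i => x i = y i)]
    simp [hammingDist]
  rw [prod_ite, prod_const, prod_const, hcard, mul_comm]
  rfl

theorem pow_hammingNorm_eq_prod {ι β R : Type*} [Fintype ι] [DecidableEq β] [Zero β]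
    [CommMonoid R] (v : ι → β) (q : R) :
    q ^ hammingNorm v = ∏ i, if v i = 0 then 1 else q := by
  simpa using (prod_ite_eq_eq_pow_hammingDist v 0 (1 : R) q).symm

theorem ZMod.eq_zero_or_eq_one (a : ZMod 2) : a = 0 ∨ a = 1 := by
  decide +revert

theorem ZMod.sum_univ_two {M : Type*} [AddCommMonoid M] (F : ZMod 2 → M) :
    ∑ u, F u = F 0 + F 1 :=
  Fin.sum_univ_two F

theorem AddChar.map_sum_eq_prod {A M ι : Type*} [AddCommMonoid A] [CommMonoid M]
    (ψ : AddChar A M) (s : Finset ι) (a : ι → A) : ψ (∑ i ∈ s, a i) = ∏ i ∈ s, ψ (a i) := by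
  induction s using Finset.cons_induction with
  | empty => simp
  | cons i s _ ih => rw [sum_cons, prod_cons, AddChar.map_add_eq_mul, ih]

theorem AddChar.sum_mem_eq_ite {G R : Type*} [AddCommGroup G] [Fintype G] [CommRing R]
    [IsDomain R] (ψ : AddChar G R) (H : AddSubgroup G) [DecidablePred (· ∈ H)]
    [Decidable (∀ g ∈ H, ψ g = 1)] :
    ∑ g with g ∈ H, ψ g = if ∀ g ∈ H, ψ g = 1 then (Nat.card H : R) else 0 := by
  classical
  have hrestrict : ∑ g with g ∈ H, ψ g = ∑ h : H, ψ.compAddMonoidHom H.subtype h :=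
    sum_subtype _ (fun g => mem_filter_univ g) _
  have htrivial : ψ.compAddMonoidHom H.subtype = 0 ↔ ∀ g ∈ H, ψ g = 1 := by
    simp [AddChar.ext_iff]
  rw [hrestrict, AddChar.sum_eq_ite, Nat.card_eq_fintype_card]
  exact if_congr htrivial rfl rfl

theorem AddSubgroup.sum_mem_sum_mem_sub {G M : Type*} [AddCommGroup G] [Fintype G]
    [AddCommMonoid M] (H : AddSubgroup G) [DecidablePred (· ∈ H)] (g : G → M) :
    ∑ y with y ∈ H, ∑ z with z ∈ H, g (z - y) = Nat.card H • ∑ c with c ∈ H, g c := by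
  have hshift : ∀ y ∈ H, ∑ z with z ∈ H, g (z - y) = ∑ c with c ∈ H, g c := fun y hy =>
    sum_nbij' (· - y) (· + y) (by simp_all [H.sub_mem]) (by simp_all [H.add_mem])
      (by simp) (by simp) (by simp)
  rw [sum_congr rfl fun y hy => hshift y (mem_filter.mp hy).2, sum_const,
    Nat.card_eq_fintype_card, Fintype.card_subtype]

noncomputable def signChar : AddChar (ZMod 2) ℝ :=
  AddChar.zmodChar 2 (by norm_num : (-1 : ℝ) ^ 2 = 1)

@[simp] theorem signChar_one : signChar 1 = -1 := by
  simp [signChar, AddChar.zmodChar_apply, ZMod.val_one]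

theorem signChar_eq_one_iff (a : ZMod 2) : signChar a = 1 ↔ a = 0 := by
  rcases a.eq_zero_or_eq_one with rfl | rfl <;> norm_num

theorem sum_signChar_dotProduct_mul_pow_hammingNorm {ι : Type*} [Fintype ι] [DecidableEq ι]
    (c : ι → ZMod 2) (q : ℝ) :
    ∑ v, signChar (c ⬝ᵥ v) * q ^ hammingNorm v =
      (1 - q) ^ hammingNorm c * (1 + q) ^ (Fintype.card ι - hammingNorm c) := by
  have hcoord : ∀ a : ZMod 2,
      ∑ u, signChar (a * u) * (if u = 0 then 1 else q) = if a = 0 then 1 + q else 1 - q := by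
    intro a
    rw [ZMod.sum_univ_two]
    rcases a.eq_zero_or_eq_one with rfl | rfl <;> simp [sub_eq_add_neg]
  simp_rw [dotProduct, AddChar.map_sum_eq_prod, pow_hammingNorm_eq_prod _ q, ← prod_mul_distrib]
  rw [← Fintype.prod_sum (fun i u => signChar (c i * u) * if u = 0 then 1 else q)]
  simp_rw [hcoord]
  simpa using prod_ite_eq_eq_pow_hammingDist c 0 (1 + q) (1 - q)

theorem sum_mem_signChar_dotProduct {ι : Type*} [Fintype ι] [DecidableEq ι]
    (C : AddSubgroup (ι → ZMod 2)) [DecidablePred (· ∈ C)] (v : ι → ZMod 2) :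
    ∑ c with c ∈ C, signChar (c ⬝ᵥ v) =
      if ∀ c ∈ C, c ⬝ᵥ v = 0 then (Nat.card C : ℝ) else 0 := by
  let ψ : AddChar (ι → ZMod 2) ℝ :=
    signChar.compAddMonoidHom (AddMonoidHom.mk' (· ⬝ᵥ v) fun a b => add_dotProduct a b v)
  simpa [ψ, signChar_eq_one_iff] using ψ.sum_mem_eq_ite C

/-- The MacWilliams identity for weight enumerators. -/
theorem sum_mem_pow_hammingNorm_eq_card_mul {ι : Type*} [Fintype ι] [DecidableEq ι]
    (C : AddSubgroup (ι → ZMod 2)) [DecidablePred (· ∈ C)] (q : ℝ) :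
    ∑ c with c ∈ C, (1 - q) ^ hammingNorm c * (1 + q) ^ (Fintype.card ι - hammingNorm c) =
      Nat.card C * ∑ v with ∀ c ∈ C, c ⬝ᵥ v = 0, q ^ hammingNorm v := by
  calc ∑ c with c ∈ C, (1 - q) ^ hammingNorm c * (1 + q) ^ (Fintype.card ι - hammingNorm c)
      = ∑ c with c ∈ C, ∑ v, signChar (c ⬝ᵥ v) * q ^ hammingNorm v := by
        simp_rw [sum_signChar_dotProduct_mul_pow_hammingNorm]
    _ = ∑ v, (∑ c with c ∈ C, signChar (c ⬝ᵥ v)) * q ^ hammingNorm v := by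
        rw [sum_comm]
        simp_rw [sum_mul]
    _ = Nat.card C * ∑ v with ∀ c ∈ C, c ⬝ᵥ v = 0, q ^ hammingNorm v := by
        simp_rw [sum_mem_signChar_dotProduct, ite_mul, zero_mul, sum_filter, mul_sum, mul_ite,
          mul_zero]

noncomputable def noiseKernel (n : ℕ) (ε : ℝ) (x y : Fin n → ZMod 2) : ℝ :=
  ε ^ hammingDist x y * (1 - ε) ^ (n - hammingDist x y)

theorem noiseKernel_eq_prod (n : ℕ) (ε : ℝ) (x y : Fin n → ZMod 2) :
    noiseKernel n ε x y = ∏ i, if x i = y i then 1 - ε else ε := by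
  rw [prod_ite_eq_eq_pow_hammingDist, Fintype.card_fin, noiseKernel]

theorem noiseKernel_eq_sub (n : ℕ) (ε : ℝ) (x y : Fin n → ZMod 2) :
    noiseKernel n ε x y = noiseKernel n ε (y - x) 0 := by
  rw [noiseKernel, noiseKernel, hammingDist_eq_hammingNorm, hammingDist_zero_right,
    neg_add_eq_sub]

theorem sum_noiseKernel_mul_noiseKernel (n : ℕ) (ε : ℝ) (y z : Fin n → ZMod 2) :
    ∑ x, noiseKernel n ε x y * noiseKernel n ε x z = noiseKernel n (2 * ε * (1 - ε)) y z := by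
  simp_rw [noiseKernel_eq_prod, ← prod_mul_distrib]
  rw [← Fintype.prod_sum fun i u =>
    (if u = y i then 1 - ε else ε) * if u = z i then 1 - ε else ε]
  refine prod_congr rfl fun i _ => ?_
  rw [ZMod.sum_univ_two]
  rcases (y i).eq_zero_or_eq_one with h | h <;>
    rcases (z i).eq_zero_or_eq_one with h' | h' <;> simp [h, h'] <;> ring

theorem two_pow_mul_noiseKernel_zero (n : ℕ) (p : ℝ) (c : Fin n → ZMod 2) :
    2 ^ n * noiseKernel n ((1 - p) / 2) c 0 =
      (1 - p) ^ hammingNorm c * (1 + p) ^ (n - hammingNorm c) := by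
  have hle : hammingNorm c ≤ n := by simpa using hammingNorm_le_card_fintype (x := c)
  have hsplit : (2 : ℝ) ^ n = 2 ^ hammingNorm c * 2 ^ (n - hammingNorm c) := by
    rw [← pow_add, Nat.add_sub_cancel' hle]
  rw [noiseKernel, hammingDist_zero_right, hsplit]
  calc _ = (2 * ((1 - p) / 2)) ^ hammingNorm c * (2 * (1 - (1 - p) / 2)) ^ (n - hammingNorm c) := by
        rw [mul_pow, mul_pow]; ring
    _ = _ := by ring_nf

theorem sum_noiseOpZ_sq (n : ℕ) (ε : ℝ) (f : (Fin n → ZMod 2) → ℝ) :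
    ∑ x, noiseOpZ n ε f x ^ 2 = ∑ y, f y * ∑ z, f z * noiseKernel n (2 * ε * (1 - ε)) y z := by
  have hop : ∀ x, noiseOpZ n ε f x = ∑ y, noiseKernel n ε x y * f y := fun x => rfl
  simp_rw [← sum_noiseKernel_mul_noiseKernel, mul_sum, hop, sq, sum_mul_sum]
  rw [sum_comm]
  refine sum_congr rfl fun y _ => ?_
  rw [sum_comm]
  refine sum_congr rfl fun z _ => sum_congr rfl fun x _ => ?_
  ring

theorem sum_codeFn_mul (n : ℕ) (C : Submodule (ZMod 2) (Fin n → ZMod 2))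
    [DecidablePred (· ∈ C)] (F : (Fin n → ZMod 2) → ℝ) :
    ∑ y, codeFn n C y * F y = 2 ^ n / Nat.card C * ∑ y with y ∈ C, F y := by
  rw [sum_filter, mul_sum]
  refine sum_congr rfl fun y _ => ?_
  by_cases hy : y ∈ C <;> simp [codeFn, hy]

theorem sum_noiseOpZ_codeFn_sq_div (n : ℕ) (C : Submodule (ZMod 2) (Fin n → ZMod 2))
    [DecidablePred (· ∈ C)] (ε : ℝ) :
    (∑ x, noiseOpZ n ε (codeFn n C) x ^ 2) / 2 ^ n =
      ∑ v with ∀ c ∈ C, c ⬝ᵥ v = 0, ((1 - 2 * ε) ^ 2) ^ hammingNorm v := by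
  set p := (1 - 2 * ε) ^ 2
  have hδ : 2 * ε * (1 - ε) = (1 - p) / 2 := by ring
  have hcode : ∑ c with c ∈ C, noiseKernel n ((1 - p) / 2) c 0 =
      Nat.card C / 2 ^ n * ∑ v with ∀ c ∈ C, c ⬝ᵥ v = 0, p ^ hammingNorm v := by
    have := sum_mem_pow_hammingNorm_eq_card_mul C.toAddSubgroup p
    simp only [Submodule.mem_toAddSubgroup, Fintype.card_fin] at this
    rw [div_mul_eq_mul_div, ← this, eq_div_iff (by positivity), sum_mul]
    exact sum_congr rfl fun c _ => by rw [mul_comm, two_pow_mul_noiseKernel_zero]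
  have htrans : ∑ y with y ∈ C, ∑ z with z ∈ C, noiseKernel n ((1 - p) / 2) y z =
      Nat.card C * ∑ c with c ∈ C, noiseKernel n ((1 - p) / 2) c 0 := by
    simpa only [← noiseKernel_eq_sub, Submodule.mem_toAddSubgroup, nsmul_eq_mul] using
      C.toAddSubgroup.sum_mem_sum_mem_sub (noiseKernel n ((1 - p) / 2) · 0)
  rw [sum_noiseOpZ_sq, hδ]
  simp_rw [sum_codeFn_mul, ← mul_sum]
  rw [htrans, hcode]
  field_simp

theorem sum_superset_pow_mul_pow {ι R : Type*} [Fintype ι] [DecidableEq ι] [CommRing R]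
    (A : Finset ι) (p : R) :
    ∑ S with A ⊆ S, p ^ #S * (1 - p) ^ (Fintype.card ι - #S) = p ^ #A := by
  have hfactor : ∀ i, p + (if i ∉ A then 1 - p else 0) = if i ∈ A then p else 1 := by
    intro i; split_ifs <;> simp_all
  have hprod := prod_add (fun _ => p) (fun i => if i ∉ A then 1 - p else 0) univ
  simp only [hfactor, prod_ite_mem, univ_inter, prod_const, prod_ite_zero, powerset_univ,
    ← compl_eq_univ_sdiff, mem_compl, card_compl] at hprod
  rw [hprod, sum_filter]
  refine sum_congr rfl fun S _ => ?_
  have hsub : (∀ i ∉ S, i ∉ A) ↔ A ⊆ S := by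
    simp only [subset_iff]; exact forall_congr' fun i => not_imp_not
  rw [if_congr hsub rfl rfl, mul_ite, mul_zero]

theorem sum_pow_hammingNorm_eq_sum_card {ι β R : Type*} [Fintype ι] [DecidableEq ι] [Zero β]
    [DecidableEq β] [CommRing R] (D : Finset (ι → β)) (p : R) :
    ∑ v ∈ D, p ^ hammingNorm v =
      ∑ S : Finset ι, p ^ #S * (1 - p) ^ (Fintype.card ι - #S) * #{v ∈ D | ∀ i ∉ S, v i = 0} := by
  have hsupp : ∀ (v : ι → β) (S : Finset ι),
      (∀ i ∉ S, v i = 0) ↔ ({i | v i ≠ 0} : Finset ι) ⊆ S := by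
    intro v S
    simp only [subset_iff, mem_filter_univ]; exact forall_congr' fun i => not_imp_comm
  simp_rw [natCast_card_filter, mul_sum, mul_boole, hsupp]
  rw [sum_comm]
  refine sum_congr rfl fun v _ => ?_
  rw [← sum_filter, sum_superset_pow_mul_pow]
  rfl

theorem forall_mem_span_dotProduct_eq_zero_iff {ι K : Type*} [Fintype ι] [CommRing K]
    (s : Set (ι → K)) (v : ι → K) :
    (∀ c ∈ Submodule.span K s, c ⬝ᵥ v = 0) ↔ ∀ c ∈ s, c ⬝ᵥ v = 0 := by
  refine ⟨fun h c hc => h c (Submodule.subset_span hc), fun h c hc => ?_⟩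
  induction hc using Submodule.span_induction with
  | mem c hc => exact h c hc
  | zero => exact zero_dotProduct v
  | add a b _ _ ha hb => rw [add_dotProduct, ha, hb, add_zero]
  | smul r a _ ha => rw [smul_dotProduct, ha, smul_zero]

theorem map_mulVecLin_spanSubset {m ι K : Type*} [Fintype ι] [DecidableEq ι] [CommRing K]
    (A : Matrix m ι K) (s : Set ι) :
    (Pi.spanSubset K s).map A.mulVecLin = Submodule.span K ((fun j i => A i j) '' s) := by
  rw [Pi.spanSubset, Submodule.map_span, Set.image_image]
  congr 1
  refine Set.image_congr fun j _ => ?_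
  rw [Pi.basisFun_apply, mulVecLin_apply, mulVec_single_one]
  rfl

theorem card_supported_ker_mul_two_pow_colRank {n k : ℕ} (G : Fin k → Fin n → ZMod 2)
    (S : Finset (Fin n)) :
    #{v | (∀ i, G i ⬝ᵥ v = 0) ∧ ∀ j ∉ S, v j = 0} * 2 ^ colRank G S = 2 ^ #S := by
  set M := (Matrix.of G).mulVecLin
  set W := Pi.spanSubset (ZMod 2) (S : Set (Fin n))
  have hrange : Module.finrank (ZMod 2) (LinearMap.range (M.domRestrict W)) = colRank G S := by
    rw [LinearMap.range_domRestrict, map_mulVecLin_spanSubset]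
    rfl
  have hW : Module.finrank (ZMod 2) W = #S := by
    rw [Pi.dim_spanSubset, Set.ncard_coe_finset]
  have hker : #{v | (∀ i, G i ⬝ᵥ v = 0) ∧ ∀ j ∉ S, v j = 0} =
      Nat.card (LinearMap.ker (M.domRestrict W)) := by
    rw [← Fintype.card_subtype, ← Nat.card_eq_fintype_card]
    refine Nat.card_congr (((Equiv.subtypeSubtypeEquivSubtypeInter (· ∈ W)
      (fun v => M v = 0)).trans (Equiv.subtypeEquivRight fun v => ?_)).symm)
    simp [W, M, Pi.mem_spanSubset_iff, funext_iff, mulVec, and_comm]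
  have hrank := LinearMap.finrank_range_add_finrank_ker (M.domRestrict W)
  rw [hker, Module.natCard_eq_pow_finrank (K := ZMod 2), Nat.card_zmod, ← pow_add, ← hW,
    ← hrank, hrange, add_comm]

theorem noise_code_second_moment_general (n k : ℕ) (G : Fin k → Fin n → ZMod 2)
    (C : Submodule (ZMod 2) (Fin n → ZMod 2))
    (hC : C = Submodule.span (ZMod 2) (Set.range G))
    (ε : ℝ) (p : ℝ) (hp : p = (1 - 2 * ε) ^ 2) :
    (∑ x : Fin n → ZMod 2, noiseOpZ n ε (codeFn n C) x ^ 2) / 2 ^ n =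
      ∑ S : Finset (Fin n),
        p ^ S.card * (1 - p) ^ (n - S.card) * 2 ^ ((S.card : ℝ) - colRank G S) := by
  classical
  have hdual : ∀ v, (∀ c ∈ C, c ⬝ᵥ v = 0) ↔ ∀ i, G i ⬝ᵥ v = 0 := by
    simpa [hC] using forall_mem_span_dotProduct_eq_zero_iff (Set.range G)
  have hcount : ∀ S : Finset (Fin n), (#{v | (∀ i, G i ⬝ᵥ v = 0) ∧ ∀ j ∉ S, v j = 0} : ℝ) =
      2 ^ ((#S : ℝ) - colRank G S) := by
    intro S
    rw [Real.rpow_sub two_pos, Real.rpow_natCast, Real.rpow_natCast, eq_div_iff (by positivity)]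
    exact_mod_cast card_supported_ker_mul_two_pow_colRank G S
  rw [sum_noiseOpZ_codeFn_sq_div, ← hp, sum_pow_hammingNorm_eq_sum_card, Fintype.card_fin]
  simp_rw [filter_filter, hdual, hcount]

theorem noise_code_second_moment (n k : ℕ) (G : Fin k → Fin n → ZMod 2)
    (C : Submodule (ZMod 2) (Fin n → ZMod 2))
    (hC : C = Submodule.span (ZMod 2) (Set.range G))
    (ε : ℝ) (hε0 : 0 ≤ ε) (hε1 : ε ≤ 1 / 2) (p : ℝ) (hp : p = (1 - 2 * ε) ^ 2) :
    (∑ x : Fin n → ZMod 2, noiseOpZ n ε (codeFn n C) x ^ 2) / 2 ^ n =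
      ∑ S : Finset (Fin n),
        p ^ S.card * (1 - p) ^ (n - S.card) * 2 ^ ((S.card : ℝ) - colRank G S) :=
  noise_code_second_moment_general n k G C hC ε p hp
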